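/- In a finite probability space with variables (X, M, W, A, Y), A binary, Y ≥ 0, assume: W ⟂ A | (X, M); there exists nonnegative h with E[Y | A, X, M] = E[h(W, A, X) | A, X, M] a.s.; positivity. Then the front-door functional θ_a := E[1{A=a}·Y] + ∑_{x,m,y} y·p(y | A=1−a, m, x)·p(m | A=a, x)·p(A=1−a | x)·p(x) satisfies E[1{A=a}·Y] + E[1{A=1−a}·min_w (p(w | a, X)/p(w | 1−a, X))·Y] ≤ θ_a ≤ E[1{A=a}·Y] + E[1{A=1−a}·max_w (p(w | a, X)/p(w | 1−a, X))·Y]. -/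

import Mathlib

open Finset Real
open scoped Classical

/-- Probability of an event under a pmf `P` on a finite sample space. -/
noncomputable def pr {Ω : Type*} [Fintype Ω] (P : Ω → ℝ) (E : Ω → Prop) : ℝ :=
  ∑ ω, if E ω then P ω else 0

/-- Expectation of `f` under `P`. -/
noncomputable def ex {Ω : Type*} [Fintype Ω] (P : Ω → ℝ) (f : Ω → ℝ) : ℝ :=
  ∑ ω, P ω * f ω

/-- Conditional expectation `E[f | E]`. -/
noncomputable def ce {Ω : Type*} [Fintype Ω] (P : Ω → ℝ) (f : Ω → ℝ) (E : Ω → Prop) : ℝ :=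
  (∑ ω, if E ω then P ω * f ω else 0) / pr P E

/-- Conditional probability `P(E | F)`. -/
noncomputable def cpr {Ω : Type*} [Fintype Ω] (P : Ω → ℝ) (E F : Ω → Prop) : ℝ :=
  pr P (fun ω => E ω ∧ F ω) / pr P F

/-!
Replace `Y` by the bridge function, then swap the conditioning value of `A` in `p(w | a', x, m)`
(allowed because `W ⟂ A | (X, M)`) and marginalize `M`. For each `x`, the front-door term becomes
`p(1 - a, x) · ∑_w h(w, 1 - a, x) p(w | a, x)`, and the arm `A = 1 - a` of the bounds becomes
`p(1 - a, x) · r(x) · ∑_w h(w, 1 - a, x) p(w | 1 - a, x)`, with `r(x)` the minimum or maximum over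
`w` of the density ratio `p(w | a, x) / p(w | 1 - a, x)`. Since `h ≥ 0`, comparing the two sums
term by term gives both inequalities.
-/

section FiniteProbability

variable {Ω V : Type*} [Fintype Ω] (P : Ω → ℝ)

theorem pr_congr {E F : Ω → Prop} (h : ∀ ω, E ω ↔ F ω) : pr P E = pr P F :=
  congr_arg (pr P) (funext fun ω => propext (h ω))

theorem pr_mono (hP : ∀ ω, 0 ≤ P ω) {E F : Ω → Prop} (h : ∀ ω, E ω → F ω) :
    pr P E ≤ pr P F :=
  sum_le_sum fun ω _ => by
    by_cases hE : E ω
    · simp [hE, h ω hE]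
    · simp only [hE, if_false]
      exact ite_nonneg (hP ω) le_rfl

theorem sum_ite_eq_sum_sum_ite_and [Fintype V] (F : Ω → Prop) [DecidablePred F] (k : Ω → V)
    (g : Ω → ℝ) :
    ∑ ω, (if F ω then g ω else 0) = ∑ v, ∑ ω, if F ω ∧ k ω = v then g ω else 0 := by
  rw [sum_comm]
  refine sum_congr rfl fun ω _ => ?_
  simp only [ite_and]
  split_ifs <;> simp

theorem sum_ite_mul_eq_ce_mul_pr (f : Ω → ℝ) {E : Ω → Prop} [DecidablePred E]
    (hE : pr P E ≠ 0) :
    ∑ ω, (if E ω then P ω * f ω else 0) = ce P f E * pr P E := by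
  rw [ce, div_mul_cancel₀ _ hE]
  congr!

theorem ce_congr {f g : Ω → ℝ} {E : Ω → Prop} (hfg : ∀ ω, E ω → f ω = g ω) :
    ce P f E = ce P g E := by
  unfold ce
  congr 1
  exact sum_congr rfl fun ω _ => by split_ifs with hE <;> simp [hfg ω, hE]

theorem ce_comp_eq_sum_mul_cpr [Fintype V] (g : V → ℝ) (k : Ω → V) (E : Ω → Prop) :
    ce P (fun ω => g (k ω)) E = ∑ v, g v * cpr P (fun ω => k ω = v) E := by
  have fiber : ∀ v, ∑ ω, (if E ω ∧ k ω = v then P ω * g (k ω) else 0) =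
      g v * pr P (fun ω => k ω = v ∧ E ω) := by
    intro v
    rw [pr, mul_sum]
    refine sum_congr rfl fun ω _ => ?_
    by_cases hk : k ω = v <;> by_cases hE : E ω <;> simp [hk, hE, mul_comm]
  simp only [ce, cpr, ← mul_div_assoc, ← sum_div]
  rw [sum_ite_eq_sum_sum_ite_and E k]
  simp only [fiber]

theorem cpr_eq_ce_indicator (E F : Ω → Prop) :
    cpr P E F = ce P (fun ω => if E ω then 1 else 0) F := by
  unfold cpr ce pr
  congr 1
  exact sum_congr rfl fun ω _ => by by_cases hE : E ω <;> by_cases hF : F ω <;> simp [hE, hF]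

theorem ce_eq_sum_ce_mul_cpr [Fintype V] (f : Ω → ℝ) (F : Ω → Prop) (k : Ω → V)
    (hF : ∀ v, pr P (fun ω => F ω ∧ k ω = v) ≠ 0) :
    ce P f F = ∑ v, ce P f (fun ω => F ω ∧ k ω = v) * cpr P (fun ω => k ω = v) F := by
  have term : ∀ v, ce P f (fun ω => F ω ∧ k ω = v) * cpr P (fun ω => k ω = v) F =
      (∑ ω, if F ω ∧ k ω = v then P ω * f ω else 0) / pr P F := by
    intro v
    rw [ce, cpr, pr_congr P (E := fun ω => k ω = v ∧ F ω) (fun ω => and_comm),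
      div_mul_div_cancel₀ (hF v)]
    congr!
  rw [sum_congr rfl fun v _ => term v, ← sum_div, ← sum_ite_eq_sum_sum_ite_and F k, ce]

theorem cpr_eq_sum_cpr_mul_cpr [Fintype V] (E F : Ω → Prop) (k : Ω → V)
    (hF : ∀ v, pr P (fun ω => F ω ∧ k ω = v) ≠ 0) :
    cpr P E F = ∑ v, cpr P E (fun ω => F ω ∧ k ω = v) * cpr P (fun ω => k ω = v) F := by
  simp only [cpr_eq_ce_indicator P E]
  exact ce_eq_sum_ce_mul_cpr P _ F k hF

theorem cpr_and_eq_cpr_of_mul_eq {E F G : Ω → Prop} (hFG : pr P (fun ω => F ω ∧ G ω) ≠ 0)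
    (hG : pr P G ≠ 0)
    (hind : pr P (fun ω => E ω ∧ F ω ∧ G ω) * pr P G =
      pr P (fun ω => E ω ∧ G ω) * pr P (fun ω => F ω ∧ G ω)) :
    cpr P E (fun ω => F ω ∧ G ω) = cpr P E G := by
  rw [cpr, cpr, div_eq_div_iff hFG hG]
  exact hind

theorem cpr_mul_pr (E F : Ω → Prop) (hF : pr P F ≠ 0) :
    cpr P E F * pr P F = pr P (fun ω => E ω ∧ F ω) :=
  div_mul_cancel₀ _ hF

theorem sum_ite_mul_comp_mul_eq_sum [Fintype V] (F : Ω → Prop) [DecidablePred F] (k : Ω → V)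
    (R : V → ℝ) (f : Ω → ℝ) :
    ∑ ω, (if F ω then P ω * (R (k ω) * f ω) else 0) =
      ∑ v, R v * ∑ ω, if F ω ∧ k ω = v then P ω * f ω else 0 := by
  rw [sum_ite_eq_sum_sum_ite_and F k]
  refine sum_congr rfl fun v _ => ?_
  rw [mul_sum]
  refine sum_congr rfl fun ω _ => ?_
  split_ifs with hω
  · rw [hω.2]
    ring
  · rw [mul_zero]

theorem sum_sum_mul_cpr_mul_cpr {U : Type*} [Fintype U] [Fintype V] (c : U → ℝ) (l : Ω → U)
    (F : Ω → Prop) (k : Ω → V) (hF : ∀ v, pr P (fun ω => F ω ∧ k ω = v) ≠ 0) :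
    ∑ v, (∑ u, c u * cpr P (fun ω => l ω = u) (fun ω => F ω ∧ k ω = v)) *
        cpr P (fun ω => k ω = v) F =
      ∑ u, c u * cpr P (fun ω => l ω = u) F := by
  conv_rhs => enter [2, u]; rw [cpr_eq_sum_cpr_mul_cpr P _ F k hF]
  simp only [sum_mul, mul_sum, mul_assoc]
  exact sum_comm

end FiniteProbability

section WeightedRatio

variable {ι : Type*} {s : Finset ι} {f g c : ι → ℝ}

theorem inf'_div_mul_sum_le (hs : s.Nonempty) (hc : ∀ i ∈ s, 0 ≤ c i)
    (hg : ∀ i ∈ s, 0 < g i) :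
    s.inf' hs (fun i => f i / g i) * ∑ i ∈ s, c i * g i ≤ ∑ i ∈ s, c i * f i := by
  rw [mul_sum]
  refine sum_le_sum fun i hi => ?_
  calc s.inf' hs (fun i => f i / g i) * (c i * g i)
      = c i * (s.inf' hs (fun i => f i / g i) * g i) := by ring
    _ ≤ c i * (f i / g i * g i) := by
      gcongr
      · exact hc i hi
      · exact (hg i hi).le
      · exact inf'_le _ hi
    _ = c i * f i := by rw [div_mul_cancel₀ _ (hg i hi).ne']

theorem sum_mul_le_sup'_div_mul_sum (hs : s.Nonempty) (hc : ∀ i ∈ s, 0 ≤ c i)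
    (hg : ∀ i ∈ s, 0 < g i) :
    ∑ i ∈ s, c i * f i ≤ s.sup' hs (fun i => f i / g i) * ∑ i ∈ s, c i * g i := by
  rw [mul_sum]
  refine sum_le_sum fun i hi => ?_
  calc c i * f i = c i * (f i / g i * g i) := by rw [div_mul_cancel₀ _ (hg i hi).ne']
    _ ≤ c i * (s.sup' hs (fun i => f i / g i) * g i) := by
      gcongr
      · exact hc i hi
      · exact (hg i hi).le
      · exact le_sup' (fun i => f i / g i) hi
    _ = s.sup' hs (fun i => f i / g i) * (c i * g i) := by ring

end WeightedRatio

section FrontDoor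

variable {Ω X M W : Type*} [Fintype Ω]
  (P : Ω → ℝ) (Xv : Ω → X) (Mv : Ω → M) (Wv : Ω → W) (Av : Ω → Bool) (Yv : Ω → ℝ)
  (h : W → Bool → X → ℝ)

theorem ce_eq_sum_mul_cpr_of_bridge [Fintype W] {a' : Bool} {x : X} {m : M}
    (hbridge : ce P Yv (fun ω => Av ω = a' ∧ Xv ω = x ∧ Mv ω = m) =
      ce P (fun ω => h (Wv ω) a' (Xv ω)) (fun ω => Av ω = a' ∧ Xv ω = x ∧ Mv ω = m)) :
    ce P Yv (fun ω => Av ω = a' ∧ Xv ω = x ∧ Mv ω = m) =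
      ∑ w, h w a' x *
        cpr P (fun ω => Wv ω = w) (fun ω => Av ω = a' ∧ Xv ω = x ∧ Mv ω = m) := by
  rw [hbridge, ce_congr P (g := fun ω => h (Wv ω) a' x) fun ω hω => by rw [hω.2.1]]
  exact ce_comp_eq_sum_mul_cpr P (fun w => h w a' x) Wv _

theorem cpr_eq_cpr_of_condIndep (hP : ∀ ω, 0 ≤ P ω) {x : X} {m : M}
    (hWA : ∀ (w : W) (a' : Bool),
      pr P (fun ω => Wv ω = w ∧ Av ω = a' ∧ Xv ω = x ∧ Mv ω = m) *
          pr P (fun ω => Xv ω = x ∧ Mv ω = m) =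
        pr P (fun ω => Wv ω = w ∧ Xv ω = x ∧ Mv ω = m) *
          pr P (fun ω => Av ω = a' ∧ Xv ω = x ∧ Mv ω = m))
    (hpos : ∀ a' : Bool, 0 < pr P fun ω => Av ω = a' ∧ Xv ω = x ∧ Mv ω = m)
    (w : W) (a' a'' : Bool) :
    cpr P (fun ω => Wv ω = w) (fun ω => Av ω = a' ∧ Xv ω = x ∧ Mv ω = m) =
      cpr P (fun ω => Wv ω = w) (fun ω => Av ω = a'' ∧ Xv ω = x ∧ Mv ω = m) := by
  have hXM : pr P (fun ω => Xv ω = x ∧ Mv ω = m) ≠ 0 :=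
    ((hpos a').trans_le (pr_mono P hP fun ω hω => hω.2)).ne'
  rw [cpr_and_eq_cpr_of_mul_eq P (hpos a').ne' hXM (hWA w a'),
    cpr_and_eq_cpr_of_mul_eq P (hpos a'').ne' hXM (hWA w a'')]

theorem sum_ite_mul_eq_sum_mul_cpr_mul_pr_of_bridge [Fintype M] [Fintype W]
    {a' : Bool} {x : X}
    (hbridge : ∀ m : M, ce P Yv (fun ω => Av ω = a' ∧ Xv ω = x ∧ Mv ω = m) =
      ce P (fun ω => h (Wv ω) a' (Xv ω)) (fun ω => Av ω = a' ∧ Xv ω = x ∧ Mv ω = m))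
    (hpos : ∀ m : M, 0 < pr P fun ω => Av ω = a' ∧ Xv ω = x ∧ Mv ω = m)
    (hAX : pr P (fun ω => Av ω = a' ∧ Xv ω = x) ≠ 0) :
    ∑ ω, (if Av ω = a' ∧ Xv ω = x then P ω * Yv ω else 0) =
      (∑ w, h w a' x * cpr P (fun ω => Wv ω = w) (fun ω => Av ω = a' ∧ Xv ω = x)) *
        pr P (fun ω => Av ω = a' ∧ Xv ω = x) := by
  have hF : ∀ m, pr P (fun ω => (Av ω = a' ∧ Xv ω = x) ∧ Mv ω = m) ≠ 0 := fun m => by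
    simpa only [and_assoc] using (hpos m).ne'
  rw [sum_ite_mul_eq_ce_mul_pr P Yv hAX, ce_eq_sum_ce_mul_cpr P Yv _ Mv hF,
    ← sum_sum_mul_cpr_mul_cpr P (fun w => h w a' x) Wv _ Mv hF]
  congr 1
  refine sum_congr rfl fun m _ => ?_
  simp only [and_assoc]
  rw [ce_eq_sum_mul_cpr_of_bridge P Xv Mv Wv Av Yv h (hbridge m)]

theorem frontDoor_sum_eq_sum_mul_cpr_mul_pr [Fintype M] [Fintype W] (hP : ∀ ω, 0 ≤ P ω)
    {a' a'' : Bool} {x : X}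
    (hWA : ∀ (w : W) (b : Bool) (m : M),
      pr P (fun ω => Wv ω = w ∧ Av ω = b ∧ Xv ω = x ∧ Mv ω = m) *
          pr P (fun ω => Xv ω = x ∧ Mv ω = m) =
        pr P (fun ω => Wv ω = w ∧ Xv ω = x ∧ Mv ω = m) *
          pr P (fun ω => Av ω = b ∧ Xv ω = x ∧ Mv ω = m))
    (hbridge : ∀ m : M, ce P Yv (fun ω => Av ω = a'' ∧ Xv ω = x ∧ Mv ω = m) =
      ce P (fun ω => h (Wv ω) a'' (Xv ω)) (fun ω => Av ω = a'' ∧ Xv ω = x ∧ Mv ω = m))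
    (hpos : ∀ (b : Bool) (m : M), 0 < pr P fun ω => Av ω = b ∧ Xv ω = x ∧ Mv ω = m)
    (hX : pr P (fun ω => Xv ω = x) ≠ 0) :
    ∑ m, ce P Yv (fun ω => Av ω = a'' ∧ Mv ω = m ∧ Xv ω = x) *
        cpr P (fun ω => Mv ω = m) (fun ω => Av ω = a' ∧ Xv ω = x) *
        cpr P (fun ω => Av ω = a'') (fun ω => Xv ω = x) * pr P (fun ω => Xv ω = x) =
      (∑ w, h w a'' x * cpr P (fun ω => Wv ω = w) (fun ω => Av ω = a' ∧ Xv ω = x)) *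
        pr P (fun ω => Av ω = a'' ∧ Xv ω = x) := by
  have hF : ∀ m, pr P (fun ω => (Av ω = a' ∧ Xv ω = x) ∧ Mv ω = m) ≠ 0 := fun m => by
    simpa only [and_assoc] using (hpos a' m).ne'
  have hce : ∀ m, ce P Yv (fun ω => Av ω = a'' ∧ Mv ω = m ∧ Xv ω = x) =
      ∑ w, h w a'' x *
        cpr P (fun ω => Wv ω = w) (fun ω => (Av ω = a' ∧ Xv ω = x) ∧ Mv ω = m) := by
    intro m
    simp only [and_comm (a := Mv _ = m), and_assoc]
    rw [ce_eq_sum_mul_cpr_of_bridge P Xv Mv Wv Av Yv h (hbridge m)]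
    simp only [cpr_eq_cpr_of_condIndep P Xv Mv Wv Av hP (fun w b => hWA w b m) (hpos · m)
      _ a'' a']
  simp only [hce, mul_assoc, cpr_mul_pr P _ _ hX]
  simp only [← mul_assoc, ← sum_mul]
  rw [sum_sum_mul_cpr_mul_cpr P (fun w => h w a'' x) Wv _ Mv hF]

end FrontDoor

theorem front_door_bounds_general {Ω X M W : Type*} [Fintype Ω] [Fintype X] [Fintype M]
    [Fintype W] [Nonempty W]
    (P : Ω → ℝ) (hP : ∀ ω, 0 ≤ P ω)
    (Xv : Ω → X) (Mv : Ω → M) (Wv : Ω → W) (Av : Ω → Bool) (Yv : Ω → ℝ) (a : Bool)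
    -- W ⟂ A | (X, M)
    (hWA : ∀ (w : W) (a' : Bool) (x : X) (m : M),
      pr P (fun ω => Wv ω = w ∧ Av ω = a' ∧ Xv ω = x ∧ Mv ω = m) *
          pr P (fun ω => Xv ω = x ∧ Mv ω = m) =
        pr P (fun ω => Wv ω = w ∧ Xv ω = x ∧ Mv ω = m) *
          pr P (fun ω => Av ω = a' ∧ Xv ω = x ∧ Mv ω = m))
    -- front-door bridge function h
    (h : W → Bool → X → ℝ) (hh : ∀ w a' x, 0 ≤ h w a' x)
    (hbridge : ∀ (a' : Bool) (x : X) (m : M),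
      ce P Yv (fun ω => Av ω = a' ∧ Xv ω = x ∧ Mv ω = m) =
        ce P (fun ω => h (Wv ω) a' (Xv ω)) (fun ω => Av ω = a' ∧ Xv ω = x ∧ Mv ω = m))
    -- positivity
    (hpos : ∀ (a' : Bool) (x : X) (m : M),
      0 < pr P fun ω => Av ω = a' ∧ Xv ω = x ∧ Mv ω = m)
    (hposW : ∀ (w : W) (a' : Bool) (x : X),
      0 < pr P fun ω => Wv ω = w ∧ Av ω = a' ∧ Xv ω = x) :
    ((∑ ω, if Av ω = a then P ω * Yv ω else 0) +
        ∑ ω, if Av ω = !a then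
          P ω * ((univ.inf' univ_nonempty fun w : W =>
              cpr P (fun ω' => Wv ω' = w) (fun ω' => Av ω' = a ∧ Xv ω' = Xv ω) /
                cpr P (fun ω' => Wv ω' = w) (fun ω' => Av ω' = !a ∧ Xv ω' = Xv ω)) * Yv ω)
          else 0) ≤
      ((∑ ω, if Av ω = a then P ω * Yv ω else 0) +
        ∑ x : X, ∑ m : M,
          ce P Yv (fun ω => Av ω = !a ∧ Mv ω = m ∧ Xv ω = x) *
            cpr P (fun ω => Mv ω = m) (fun ω => Av ω = a ∧ Xv ω = x) *
            cpr P (fun ω => Av ω = !a) (fun ω => Xv ω = x) * pr P (fun ω => Xv ω = x)) ∧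
    ((∑ ω, if Av ω = a then P ω * Yv ω else 0) +
        ∑ x : X, ∑ m : M,
          ce P Yv (fun ω => Av ω = !a ∧ Mv ω = m ∧ Xv ω = x) *
            cpr P (fun ω => Mv ω = m) (fun ω => Av ω = a ∧ Xv ω = x) *
            cpr P (fun ω => Av ω = !a) (fun ω => Xv ω = x) * pr P (fun ω => Xv ω = x)) ≤
      (∑ ω, if Av ω = a then P ω * Yv ω else 0) +
        ∑ ω, if Av ω = !a then
          P ω * ((univ.sup' univ_nonempty fun w : W =>
              cpr P (fun ω' => Wv ω' = w) (fun ω' => Av ω' = a ∧ Xv ω' = Xv ω) /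
                cpr P (fun ω' => Wv ω' = w) (fun ω' => Av ω' = !a ∧ Xv ω' = Xv ω)) * Yv ω)
          else 0 := by
  have hAX : ∀ a' x, 0 < pr P (fun ω => Av ω = a' ∧ Xv ω = x) := fun a' x =>
    (hposW (Classical.arbitrary W) a' x).trans_le (pr_mono P hP fun ω hω => hω.2)
  have hX : ∀ x, pr P (fun ω => Xv ω = x) ≠ 0 := fun x =>
    ((hAX a x).trans_le (pr_mono P hP fun ω hω => hω.2)).ne'
  have hW : ∀ a' x w, 0 < cpr P (fun ω => Wv ω = w) (fun ω => Av ω = a' ∧ Xv ω = x) :=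
    fun a' x w => div_pos (hposW w a' x) (hAX a' x)
  simp only [frontDoor_sum_eq_sum_mul_cpr_mul_pr P Xv Mv Wv Av Yv h hP (hWA · · _ ·)
    (hbridge _ _) (hpos · _) (hX _)]
  constructor
  · rw [sum_ite_mul_comp_mul_eq_sum P _ Xv (fun x => univ.inf' univ_nonempty fun w : W =>
      cpr P (fun ω => Wv ω = w) (fun ω => Av ω = a ∧ Xv ω = x) /
        cpr P (fun ω => Wv ω = w) (fun ω => Av ω = !a ∧ Xv ω = x))]
    simp only [sum_ite_mul_eq_sum_mul_cpr_mul_pr_of_bridge P Xv Mv Wv Av Yv h (hbridge _ _)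
      (hpos _ _) (hAX _ _).ne', ← mul_assoc]
    refine add_le_add_right
      (sum_le_sum fun x _ => mul_le_mul_of_nonneg_right ?_ (hAX _ x).le) _
    exact inf'_div_mul_sum_le univ_nonempty (fun w _ => hh w _ x) (fun w _ => hW _ x w)
  · rw [sum_ite_mul_comp_mul_eq_sum P _ Xv (fun x => univ.sup' univ_nonempty fun w : W =>
      cpr P (fun ω => Wv ω = w) (fun ω => Av ω = a ∧ Xv ω = x) /
        cpr P (fun ω => Wv ω = w) (fun ω => Av ω = !a ∧ Xv ω = x))]
    simp only [sum_ite_mul_eq_sum_mul_cpr_mul_pr_of_bridge P Xv Mv Wv Av Yv h (hbridge _ _)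
      (hpos _ _) (hAX _ _).ne', ← mul_assoc]
    refine add_le_add_right
      (sum_le_sum fun x _ => mul_le_mul_of_nonneg_right ?_ (hAX _ x).le) _
    exact sum_mul_le_sup'_div_mul_sum univ_nonempty (fun w _ => hh w _ x) (fun w _ => hW _ x w)

/-- Theorem 5: front-door model with a hidden mediator — bounds on
`θ_a = E[1{A=a}Y] + ∑_{x,m,y} y·p(y | 1−a, m, x)·p(m | a, x)·p(1−a | x)·p(x)`. -/
theorem front_door_bounds {Ω X M W : Type*} [Fintype Ω] [Fintype X] [Fintype M]
    [Fintype W] [Nonempty W]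
    (P : Ω → ℝ) (hP : ∀ ω, 0 ≤ P ω) (hP1 : ∑ ω, P ω = 1)
    (Xv : Ω → X) (Mv : Ω → M) (Wv : Ω → W) (Av : Ω → Bool) (Yv : Ω → ℝ) (a : Bool)
    (hY : ∀ ω, 0 ≤ Yv ω)
    -- W ⟂ A | (X, M)
    (hWA : ∀ (w : W) (a' : Bool) (x : X) (m : M),
      pr P (fun ω => Wv ω = w ∧ Av ω = a' ∧ Xv ω = x ∧ Mv ω = m) *
          pr P (fun ω => Xv ω = x ∧ Mv ω = m) =
        pr P (fun ω => Wv ω = w ∧ Xv ω = x ∧ Mv ω = m) *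
          pr P (fun ω => Av ω = a' ∧ Xv ω = x ∧ Mv ω = m))
    -- front-door bridge function h
    (h : W → Bool → X → ℝ) (hh : ∀ w a' x, 0 ≤ h w a' x)
    (hbridge : ∀ (a' : Bool) (x : X) (m : M),
      ce P Yv (fun ω => Av ω = a' ∧ Xv ω = x ∧ Mv ω = m) =
        ce P (fun ω => h (Wv ω) a' (Xv ω)) (fun ω => Av ω = a' ∧ Xv ω = x ∧ Mv ω = m))
    -- positivity
    (hpos : ∀ (a' : Bool) (x : X) (m : M),
      0 < pr P fun ω => Av ω = a' ∧ Xv ω = x ∧ Mv ω = m)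
    (hposW : ∀ (w : W) (a' : Bool) (x : X),
      0 < pr P fun ω => Wv ω = w ∧ Av ω = a' ∧ Xv ω = x) :
    ((∑ ω, if Av ω = a then P ω * Yv ω else 0) +
        ∑ ω, if Av ω = !a then
          P ω * ((univ.inf' univ_nonempty fun w : W =>
              cpr P (fun ω' => Wv ω' = w) (fun ω' => Av ω' = a ∧ Xv ω' = Xv ω) /
                cpr P (fun ω' => Wv ω' = w) (fun ω' => Av ω' = !a ∧ Xv ω' = Xv ω)) * Yv ω)
          else 0) ≤
      ((∑ ω, if Av ω = a then P ω * Yv ω else 0) +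
        ∑ x : X, ∑ m : M,
          ce P Yv (fun ω => Av ω = !a ∧ Mv ω = m ∧ Xv ω = x) *
            cpr P (fun ω => Mv ω = m) (fun ω => Av ω = a ∧ Xv ω = x) *
            cpr P (fun ω => Av ω = !a) (fun ω => Xv ω = x) * pr P (fun ω => Xv ω = x)) ∧
    ((∑ ω, if Av ω = a then P ω * Yv ω else 0) +
        ∑ x : X, ∑ m : M,
          ce P Yv (fun ω => Av ω = !a ∧ Mv ω = m ∧ Xv ω = x) *
            cpr P (fun ω => Mv ω = m) (fun ω => Av ω = a ∧ Xv ω = x) *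
            cpr P (fun ω => Av ω = !a) (fun ω => Xv ω = x) * pr P (fun ω => Xv ω = x)) ≤
      (∑ ω, if Av ω = a then P ω * Yv ω else 0) +
        ∑ ω, if Av ω = !a then
          P ω * ((univ.sup' univ_nonempty fun w : W =>
              cpr P (fun ω' => Wv ω' = w) (fun ω' => Av ω' = a ∧ Xv ω' = Xv ω) /
                cpr P (fun ω' => Wv ω' = w) (fun ω' => Av ω' = !a ∧ Xv ω' = Xv ω)) * Yv ω)
          else 0 :=
  front_door_bounds_general P hP Xv Mv Wv Av Yv a hWA h hh hbridge hpos hposW
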